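/- arXiv:1704.05947 — 2 statements merged into one kernel-verified Lean document; each statement's English description precedes it below -/
import Mathlib

section
/- Let G (with m modes, state constraint P x ≤ p, noise bounds ε_η, ε_ν) and Ḡ (with m̄ modes, state constraint P̄ x̄ ≤ p̄, noise bounds ε_η̄, ε_ν̄) be two discrete-time switched affine models with the same input dimension n_u and output dimension n_y, and let T be a positive integer. Suppose there exist sequences x_0,…,x_T ∈ ℝ^n, x̄_0,…,x̄_T ∈ ℝ^{n̄}, inputs u_t ∈ ℝ^{n_u} with ‖u_t‖_∞ ≤ U, noises η_t, η̄_t ∈ ℝ^{n_y} and ν_t ∈ ℝ^n, ν̄_t ∈ ℝ^{n̄}, binary variables a_{i,j,t} ∈ {0,1} with Σ_{i=1}^m Σ_{j=1}^{m̄} a_{i,j,t} = 1 for every t, slack vectors s_{i,t} ∈ ℝ^n, s̄_{j,t} ∈ ℝ^{n̄}, r_{i,j,t} ∈ ℝ^{n_y}, and a real δ, such that for all t ∈ {0,…,T−1}, all i ∈ {1,…,m}, and all j ∈ {1,…,m̄}: x_{t+1} = A_i x_t + B_i u_t + f_i + ν_t + s_{i,t}; x̄_{t+1} = Ā_j x̄_t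 + B̄_j u_t + f̄_j + ν̄_t + s̄_{j,t}; P x_t ≤ p; P̄ x̄_t ≤ p̄; C_i x_t + D_i u_t + g_i + η_t = C̄_j x̄_t + D̄_j u_t + ḡ_j + η̄_t + r_{i,j,t}; ‖η_t‖_∞ ≤ ε_η, ‖η̄_t‖_∞ ≤ ε_η̄, ‖ν_t‖_∞ ≤ ε_ν, ‖ν̄_t‖_∞ ≤ ε_ν̄; the SOS-1 conditions hold (for every component, at most one of a_{i,j,t} and s_{i,t}^k is nonzero, at most one of a_{i,j,t} and s̄_{j,t}^k is nonzero, and at most one of a_{i,j,t} and r_{i,j,t}^l is nonzero); and max(‖η_t − η̄_t‖_∞, ‖ν_t − ν̄_t‖_∞) ≤ δ. Then G and Ḡ are not T-distinguishable, i.e., B^T(G) ∩ B^T(Ḡ) ≠ ∅. -/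
open Matrix

/-- A discrete-time switched affine (SWA) model with `m` modes, state dimension `n`,
input dimension `nu`, output dimension `ny`, `q` state constraints `P x ≤ p`,
input bound `U`, measurement-noise bound `εη` and process-noise bound `εν`. -/
structure SWA (n nu ny q m : ℕ) where
  A : Fin m → Matrix (Fin n) (Fin n) ℝ
  B : Fin m → Matrix (Fin n) (Fin nu) ℝ
  C : Fin m → Matrix (Fin ny) (Fin n) ℝ
  D : Fin m → Matrix (Fin ny) (Fin nu) ℝ
  f : Fin m → Fin n → ℝ
  g : Fin m → Fin ny → ℝ
  P : Matrix (Fin q) (Fin n) ℝ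
  p : Fin q → ℝ
  U : ℝ
  εη : ℝ
  εν : ℝ

/-- The length-`N` behavior of an SWA model: the input-output sequence
`{(u_t, y_t)}_{t=0}^{N-1}` (given as `ℕ`-indexed functions, only the first `N`
values matter) is compatible with the model.  The norm `‖·‖` on `Fin k → ℝ`
is the sup-norm. -/
def InBehavior {n nu ny q m : ℕ} (G : SWA n nu ny q m) (N : ℕ)
    (u : ℕ → Fin nu → ℝ) (y : ℕ → Fin ny → ℝ) : Prop :=
  (∀ t < N, ‖u t‖ ≤ G.U) ∧
  ∃ (x : ℕ → Fin n → ℝ) (σ : ℕ → Fin m)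
    (η : ℕ → Fin ny → ℝ) (ν : ℕ → Fin n → ℝ),
    ∀ t < N,
      (∀ k, (G.P.mulVec (x t)) k ≤ G.p k) ∧
      ‖η t‖ ≤ G.εη ∧ ‖ν t‖ ≤ G.εν ∧
      x (t + 1) = (G.A (σ t)).mulVec (x t) + (G.B (σ t)).mulVec (u t)
        + G.f (σ t) + ν t ∧
      y t = (G.C (σ t)).mulVec (x t) + (G.D (σ t)).mulVec (u t)
        + G.g (σ t) + η t

/-- Two SWA models (with the same input and output dimensions) are
`T`-distinguishable if their length-`T` behaviors do not intersect. -/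
def TDistinguishable {n nu ny q m q' m' : ℕ}
    (G : SWA n nu ny q m) (Gb : SWA n nu ny q' m') (T : ℕ) : Prop :=
  ¬ ∃ (u : ℕ → Fin nu → ℝ) (y : ℕ → Fin ny → ℝ),
      InBehavior G T u y ∧ InBehavior Gb T u y

/-!
Each time step has a mode pair `(i, j)` with `a i j t ≠ 0`, since the binaries sum to one. The
SOS-1 constraints force the slacks `s i t`, `sb j t` and `r i j t` of that pair to vanish, so along
the selected mode sequences the two state trajectories are genuine runs of `G` and `Gb` producing the
same output under the same input: this input–output pair lies in both behaviors.
-/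

theorem exists_pair_ne_zero_of_sum_sum_ne_zero {ι κ M : Type*} [Fintype ι] [Fintype κ]
    [AddCommMonoid M] {a : ι → κ → M} (h : ∑ i, ∑ j, a i j ≠ 0) :
    ∃ p : ι × κ, a p.1 p.2 ≠ 0 := by
  rw [← Fintype.sum_prod_type'] at h
  obtain ⟨p, -, hp⟩ := Finset.exists_ne_zero_of_sum_ne_zero h
  exact ⟨p, hp⟩

theorem exists_seq_forall_lt {α : Type*} {T : ℕ} {p : ℕ → α → Prop} (hT : 0 < T)
    (h : ∀ t < T, ∃ x, p t x) : ∃ σ : ℕ → α, ∀ t < T, p t (σ t) := by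
  have : Nonempty α := ⟨(h 0 hT).choose⟩
  choose! σ hσ using h
  exact ⟨σ, hσ⟩

theorem eq_zero_of_sos1 {ι M N : Type*} [Zero M] [Zero N] {c : M} {v : ι → N} (hc : c ≠ 0)
    (h : ∀ k, c = 0 ∨ v k = 0) : v = 0 :=
  funext fun k => (h k).resolve_left hc

theorem feasibility_implies_not_TDistinguishable_general
    {n nu ny q m q' m' T : ℕ} (hT : 0 < T)
    (G : SWA n nu ny q m) (Gb : SWA n nu ny q' m')
    (U : ℝ) (hU1 : G.U = U) (hU2 : Gb.U = U)
    (x : ℕ → Fin n → ℝ) (xb : ℕ → Fin n → ℝ)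
    (u : ℕ → Fin nu → ℝ)
    (η ηb : ℕ → Fin ny → ℝ) (ν : ℕ → Fin n → ℝ) (νb : ℕ → Fin n → ℝ)
    (a : Fin m → Fin m' → ℕ → ℝ)
    (s : Fin m → ℕ → Fin n → ℝ) (sb : Fin m' → ℕ → Fin n → ℝ)
    (r : Fin m → Fin m' → ℕ → Fin ny → ℝ)
    (hu : ∀ t < T, ‖u t‖ ≤ U)
    (hsum : ∀ t < T, ∑ i : Fin m, ∑ j : Fin m', a i j t = 1)
    (hdyn : ∀ i, ∀ t < T,
      x (t + 1) = (G.A i).mulVec (x t) + (G.B i).mulVec (u t) + G.f i + ν t + s i t)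
    (hdynb : ∀ j, ∀ t < T,
      xb (t + 1) = (Gb.A j).mulVec (xb t) + (Gb.B j).mulVec (u t) + Gb.f j + νb t + sb j t)
    (hP : ∀ t < T, ∀ k, (G.P.mulVec (x t)) k ≤ G.p k)
    (hPb : ∀ t < T, ∀ k, (Gb.P.mulVec (xb t)) k ≤ Gb.p k)
    (hout : ∀ i j, ∀ t < T,
      (G.C i).mulVec (x t) + (G.D i).mulVec (u t) + G.g i + η t
        = (Gb.C j).mulVec (xb t) + (Gb.D j).mulVec (u t) + Gb.g j + ηb t + r i j t)
    (hη : ∀ t < T, ‖η t‖ ≤ G.εη) (hηb : ∀ t < T, ‖ηb t‖ ≤ Gb.εη)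
    (hν : ∀ t < T, ‖ν t‖ ≤ G.εν) (hνb : ∀ t < T, ‖νb t‖ ≤ Gb.εν)
    (hsos_s : ∀ i j, ∀ t < T, ∀ k, a i j t = 0 ∨ s i t k = 0)
    (hsos_sb : ∀ i j, ∀ t < T, ∀ k, a i j t = 0 ∨ sb j t k = 0)
    (hsos_r : ∀ i j, ∀ t < T, ∀ l, a i j t = 0 ∨ r i j t l = 0) :
    ¬ TDistinguishable G Gb T := by
  obtain ⟨σ, hσ⟩ := exists_seq_forall_lt hT fun t ht =>
    exists_pair_ne_zero_of_sum_sum_ne_zero (by rw [hsum t ht]; exact one_ne_zero)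
  have hs : ∀ t < T, s (σ t).1 t = 0 := fun t ht => eq_zero_of_sos1 (hσ t ht) (hsos_s _ _ t ht)
  have hsb : ∀ t < T, sb (σ t).2 t = 0 := fun t ht =>
    eq_zero_of_sos1 (hσ t ht) (hsos_sb _ _ t ht)
  have hr : ∀ t < T, r (σ t).1 (σ t).2 t = 0 := fun t ht =>
    eq_zero_of_sos1 (hσ t ht) (hsos_r _ _ t ht)
  refine not_not_intro ⟨u, fun t => (G.C (σ t).1).mulVec (x t) + (G.D (σ t).1).mulVec (u t)
      + G.g (σ t).1 + η t, ⟨hU1 ▸ hu, x, fun t => (σ t).1, η, ν, fun t ht => ?_⟩,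
      ⟨hU2 ▸ hu, xb, fun t => (σ t).2, ηb, νb, fun t ht => ?_⟩⟩
  · refine ⟨hP t ht, hη t ht, hν t ht, ?_, rfl⟩
    simpa only [hs t ht, add_zero] using hdyn (σ t).1 t ht
  · refine ⟨hPb t ht, hηb t ht, hνb t ht, ?_, ?_⟩
    · simpa only [hsb t ht, add_zero] using hdynb (σ t).2 t ht
    · simpa only [hr t ht, add_zero] using hout (σ t).1 (σ t).2 t ht

/-- feasibility of the SOS-1 MILP (P_T) implies that the two models
are not `T`-distinguishable. -/
theorem feasibility_implies_not_TDistinguishable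
    {n nu ny q m q' m' T : ℕ} (hT : 0 < T)
    (G : SWA n nu ny q m) (Gb : SWA n nu ny q' m')
    (U : ℝ) (hU1 : G.U = U) (hU2 : Gb.U = U)
    (x : ℕ → Fin n → ℝ) (xb : ℕ → Fin n → ℝ)
    (u : ℕ → Fin nu → ℝ)
    (η ηb : ℕ → Fin ny → ℝ) (ν : ℕ → Fin n → ℝ) (νb : ℕ → Fin n → ℝ)
    (a : Fin m → Fin m' → ℕ → ℝ)
    (s : Fin m → ℕ → Fin n → ℝ) (sb : Fin m' → ℕ → Fin n → ℝ)
    (r : Fin m → Fin m' → ℕ → Fin ny → ℝ) (δ : ℝ)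
    (hu : ∀ t < T, ‖u t‖ ≤ U)
    (ha01 : ∀ i j, ∀ t < T, a i j t = 0 ∨ a i j t = 1)
    (hsum : ∀ t < T, ∑ i : Fin m, ∑ j : Fin m', a i j t = 1)
    (hdyn : ∀ i, ∀ t < T,
      x (t + 1) = (G.A i).mulVec (x t) + (G.B i).mulVec (u t) + G.f i + ν t + s i t)
    (hdynb : ∀ j, ∀ t < T,
      xb (t + 1) = (Gb.A j).mulVec (xb t) + (Gb.B j).mulVec (u t) + Gb.f j + νb t + sb j t)
    (hP : ∀ t < T, ∀ k, (G.P.mulVec (x t)) k ≤ G.p k)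
    (hPb : ∀ t < T, ∀ k, (Gb.P.mulVec (xb t)) k ≤ Gb.p k)
    (hout : ∀ i j, ∀ t < T,
      (G.C i).mulVec (x t) + (G.D i).mulVec (u t) + G.g i + η t
        = (Gb.C j).mulVec (xb t) + (Gb.D j).mulVec (u t) + Gb.g j + ηb t + r i j t)
    (hη : ∀ t < T, ‖η t‖ ≤ G.εη) (hηb : ∀ t < T, ‖ηb t‖ ≤ Gb.εη)
    (hν : ∀ t < T, ‖ν t‖ ≤ G.εν) (hνb : ∀ t < T, ‖νb t‖ ≤ Gb.εν)
    (hsos_s : ∀ i j, ∀ t < T, ∀ k, a i j t = 0 ∨ s i t k = 0)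
    (hsos_sb : ∀ i j, ∀ t < T, ∀ k, a i j t = 0 ∨ sb j t k = 0)
    (hsos_r : ∀ i j, ∀ t < T, ∀ l, a i j t = 0 ∨ r i j t l = 0)
    (hδ : ∀ t < T, max ‖η t - ηb t‖ ‖ν t - νb t‖ ≤ δ) :
    ¬ TDistinguishable G Gb T :=
  feasibility_implies_not_TDistinguishable_general hT G Gb U hU1 hU2 x xb u η ηb ν νb a s sb r hu
    hsum hdyn hdynb hP hPb hout hη hηb hν hνb hsos_s hsos_sb hsos_r
end

section
/- Let G (with m modes, state constraint P x ≤ p, noise bounds ε_η, ε_ν) and Ḡ (with m̄ modes, state constraint P̄ x̄ ≤ p̄, noise bounds ε_η̄, ε_ν̄) be two discrete-time switched affine models with the same input dimension n_u and output dimension n_y, and let T be a positive integer. Suppose G and Ḡ are not T-distinguishable, i.e., there is an input–output sequence {(u_t, y_t)}_{t=0}^{T-1} belonging to both B^T(G) and B^T(Ḡ). Then there exist sequences x_0,…,x_T ∈ ℝ^n, x̄_0,…,x̄_T ∈ ℝ^{n̄}, inputs u_t ∈ ℝ^{n_u} with ‖u_t‖_∞ ≤ U, noises η_t, η̄_t ∈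 ℝ^{n_y} and ν_t ∈ ℝ^n, ν̄_t ∈ ℝ^{n̄}, binary variables a_{i,j,t} ∈ {0,1} with Σ_{i=1}^m Σ_{j=1}^{m̄} a_{i,j,t} = 1 for every t, slack vectors s_{i,t} ∈ ℝ^n, s̄_{j,t} ∈ ℝ^{n̄}, r_{i,j,t} ∈ ℝ^{n_y}, and a real δ ≥ 0, satisfying for all t ∈ {0,…,T−1}, all i ∈ {1,…,m}, and all j ∈ {1,…,m̄}: x_{t+1} = A_i x_t + B_i u_t + f_i + ν_t + s_{i,t}; x̄_{t+1} = Ā_j x̄_t + B̄_j u_t + f̄_j + ν̄_t + s̄_{j,t}; P x_t ≤ p; P̄ x̄_t ≤ p̄; C_i x_t + D_i u_t + g_i + η_t = C̄_j x̄_t + D̄_j u_t + ḡ_j + η̄_t + r_{i,j,t}; ‖η_t‖_∞ ≤ ε_η, ‖η̄_t‖_∞ ≤ ε_η̄, ‖ν_t‖_∞ ≤ ε_ν, ‖ν̄_t‖_∞ ≤ ε_ν̄; the SOS-1 conditions (for every component, at most one of a_{i,j,t} and s_{i,t}^k is nonzero, at most one of a_{i,j,t} and s̄_{j,t}^k is nonzero,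 and at most one of a_{i,j,t} and r_{i,j,t}^l is nonzero); and max(‖η_t − η̄_t‖_∞, ‖ν_t − ν̄_t‖_∞) ≤ δ. -/
open Matrix

/-!
A common input–output trajectory of `G` and `Ḡ` comes with state trajectories and mode
signals `σ`, `σ̄` of both models. Let `a_{i,j,t}` indicate the active mode pair `(σ_t, σ̄_t)`
and let the slacks be the defects of the state and output equations when the modes `i`, `j`
are imposed instead: these defects vanish for the active modes, which is exactly the
SOS-1 condition. Finally `δ` is any nonnegative bound of the finitely many noise
differences.
-/

lemma exists_nonneg_forall_lt_le {α : Type*} [LinearOrder α] [Zero α] (f : ℕ → α) (T : ℕ) :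
    ∃ δ, 0 ≤ δ ∧ ∀ t < T, f t ≤ δ := by
  obtain ⟨M, hM⟩ := ((Set.finite_Iio T).image f).bddAbove
  exact ⟨max M 0, le_max_right _ _, fun t ht =>
    (hM (Set.mem_image_of_mem f (Set.mem_Iio.2 ht))).trans (le_max_left _ _)⟩

lemma sum_sum_ite_and_eq {ι κ M : Type*} [Fintype ι] [Fintype κ] [DecidableEq ι]
    [DecidableEq κ] [AddCommMonoid M] (a : ι) (b : κ) (c : M) :
    ∑ i, ∑ j, (if a = i ∧ b = j then c else 0) = c := by
  simp [ite_and]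

lemma ite_eq_zero_or_of_imp {R M : Type*} [Zero R] [Zero M] {p : Prop} [Decidable p]
    (c : R) {v : M} (hv : p → v = 0) : (if p then c else 0) = 0 ∨ v = 0 := by
  by_cases hp : p
  · exact Or.inr (hv hp)
  · exact Or.inl (if_neg hp)

namespace SWA

variable {n nu ny q m : ℕ} (G : SWA n nu ny q m)

def output (x : ℕ → Fin n → ℝ) (u : ℕ → Fin nu → ℝ) (η : ℕ → Fin ny → ℝ) (i : Fin m)
    (t : ℕ) : Fin ny → ℝ :=
  G.C i *ᵥ x t + G.D i *ᵥ u t + G.g i + η t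

def stepDefect (x : ℕ → Fin n → ℝ) (u : ℕ → Fin nu → ℝ) (ν : ℕ → Fin n → ℝ) (i : Fin m)
    (t : ℕ) : Fin n → ℝ :=
  x (t + 1) - (G.A i *ᵥ x t + G.B i *ᵥ u t + G.f i + ν t)

lemma eq_add_stepDefect (x : ℕ → Fin n → ℝ) (u : ℕ → Fin nu → ℝ) (ν : ℕ → Fin n → ℝ)
    (i : Fin m) (t : ℕ) :
    x (t + 1) = G.A i *ᵥ x t + G.B i *ᵥ u t + G.f i + ν t + G.stepDefect x u ν i t :=
  (add_sub_cancel _ _).symm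

lemma stepDefect_eq_zero {x : ℕ → Fin n → ℝ} {u : ℕ → Fin nu → ℝ} {ν : ℕ → Fin n → ℝ}
    {i : Fin m} {t : ℕ} (h : x (t + 1) = G.A i *ᵥ x t + G.B i *ᵥ u t + G.f i + ν t) :
    G.stepDefect x u ν i t = 0 :=
  sub_eq_zero.2 h

end SWA

theorem not_TDistinguishable_implies_feasibility_general
    {n nu ny q m q' m' T : ℕ}
    (G : SWA n nu ny q m) (Gb : SWA n nu ny q' m')
    (U : ℝ) (hU1 : G.U = U)
    (hnd : ¬ TDistinguishable G Gb T) :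
    ∃ (x : ℕ → Fin n → ℝ) (xb : ℕ → Fin n → ℝ)
      (u : ℕ → Fin nu → ℝ)
      (η ηb : ℕ → Fin ny → ℝ) (ν : ℕ → Fin n → ℝ) (νb : ℕ → Fin n → ℝ)
      (a : Fin m → Fin m' → ℕ → ℝ)
      (s : Fin m → ℕ → Fin n → ℝ) (sb : Fin m' → ℕ → Fin n → ℝ)
      (r : Fin m → Fin m' → ℕ → Fin ny → ℝ) (δ : ℝ),
      0 ≤ δ ∧
      (∀ t < T, ‖u t‖ ≤ U) ∧
      (∀ i j, ∀ t < T, a i j t = 0 ∨ a i j t = 1) ∧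
      (∀ t < T, ∑ i : Fin m, ∑ j : Fin m', a i j t = 1) ∧
      (∀ i, ∀ t < T,
        x (t + 1) = (G.A i).mulVec (x t) + (G.B i).mulVec (u t) + G.f i + ν t + s i t) ∧
      (∀ j, ∀ t < T,
        xb (t + 1) = (Gb.A j).mulVec (xb t) + (Gb.B j).mulVec (u t) + Gb.f j + νb t + sb j t) ∧
      (∀ t < T, ∀ k, (G.P.mulVec (x t)) k ≤ G.p k) ∧
      (∀ t < T, ∀ k, (Gb.P.mulVec (xb t)) k ≤ Gb.p k) ∧
      (∀ i j, ∀ t < T,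
        (G.C i).mulVec (x t) + (G.D i).mulVec (u t) + G.g i + η t
          = (Gb.C j).mulVec (xb t) + (Gb.D j).mulVec (u t) + Gb.g j + ηb t + r i j t) ∧
      (∀ t < T, ‖η t‖ ≤ G.εη) ∧ (∀ t < T, ‖ηb t‖ ≤ Gb.εη) ∧
      (∀ t < T, ‖ν t‖ ≤ G.εν) ∧ (∀ t < T, ‖νb t‖ ≤ Gb.εν) ∧
      (∀ i j, ∀ t < T, ∀ k, a i j t = 0 ∨ s i t k = 0) ∧
      (∀ i j, ∀ t < T, ∀ k, a i j t = 0 ∨ sb j t k = 0) ∧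
      (∀ i j, ∀ t < T, ∀ l, a i j t = 0 ∨ r i j t l = 0) ∧
      (∀ t < T, max ‖η t - ηb t‖ ‖ν t - νb t‖ ≤ δ) := by
  obtain ⟨u, y, ⟨hu, x, σ, η, ν, h⟩, -, xb, σb, ηb, νb, hb⟩ := not_not.mp hnd
  obtain ⟨δ, hδ0, hδ⟩ := exists_nonneg_forall_lt_le (fun t => max ‖η t - ηb t‖ ‖ν t - νb t‖) T
  refine ⟨x, xb, u, η, ηb, ν, νb, fun i j t => if σ t = i ∧ σb t = j then 1 else 0,
    G.stepDefect x u ν, Gb.stepDefect xb u νb,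
    fun i j t => G.output x u η i t - Gb.output xb u ηb j t, δ, hδ0, fun t ht => hU1 ▸ hu t ht,
    fun i j t _ => (ite_eq_or_eq _ _ _).symm, fun t _ => sum_sum_ite_and_eq (σ t) (σb t) 1,
    fun i t _ => G.eq_add_stepDefect x u ν i t, fun j t _ => Gb.eq_add_stepDefect xb u νb j t,
    fun t ht => (h t ht).1, fun t ht => (hb t ht).1, fun i j t _ => (add_sub_cancel _ _).symm,
    fun t ht => (h t ht).2.1, fun t ht => (hb t ht).2.1,
    fun t ht => (h t ht).2.2.1, fun t ht => (hb t ht).2.2.1, ?_, ?_, ?_, hδ⟩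
  · rintro i j t ht k
    refine ite_eq_zero_or_of_imp _ ?_
    rintro ⟨rfl, -⟩
    exact congrFun (G.stepDefect_eq_zero (h t ht).2.2.2.1) k
  · rintro i j t ht k
    refine ite_eq_zero_or_of_imp _ ?_
    rintro ⟨-, rfl⟩
    exact congrFun (Gb.stepDefect_eq_zero (hb t ht).2.2.2.1) k
  · rintro i j t ht l
    refine ite_eq_zero_or_of_imp _ ?_
    rintro ⟨rfl, rfl⟩
    -- both outputs of the active modes equal the common measurement `y t`
    exact congrFun (sub_eq_zero.2 ((h t ht).2.2.2.2.symm.trans (hb t ht).2.2.2.2)) l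

/-- if the two models are not `T`-distinguishable, then the SOS-1
MILP (P_T) is feasible. -/
theorem not_TDistinguishable_implies_feasibility
    {n nu ny q m q' m' T : ℕ} (hT : 0 < T)
    (G : SWA n nu ny q m) (Gb : SWA n nu ny q' m')
    (U : ℝ) (hU1 : G.U = U) (hU2 : Gb.U = U)
    (hnd : ¬ TDistinguishable G Gb T) :
    ∃ (x : ℕ → Fin n → ℝ) (xb : ℕ → Fin n → ℝ)
      (u : ℕ → Fin nu → ℝ)
      (η ηb : ℕ → Fin ny → ℝ) (ν : ℕ → Fin n → ℝ) (νb : ℕ → Fin n → ℝ)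
      (a : Fin m → Fin m' → ℕ → ℝ)
      (s : Fin m → ℕ → Fin n → ℝ) (sb : Fin m' → ℕ → Fin n → ℝ)
      (r : Fin m → Fin m' → ℕ → Fin ny → ℝ) (δ : ℝ),
      0 ≤ δ ∧
      (∀ t < T, ‖u t‖ ≤ U) ∧
      (∀ i j, ∀ t < T, a i j t = 0 ∨ a i j t = 1) ∧
      (∀ t < T, ∑ i : Fin m, ∑ j : Fin m', a i j t = 1) ∧
      (∀ i, ∀ t < T,
        x (t + 1) = (G.A i).mulVec (x t) + (G.B i).mulVec (u t) + G.f i + ν t + s i t) ∧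
      (∀ j, ∀ t < T,
        xb (t + 1) = (Gb.A j).mulVec (xb t) + (Gb.B j).mulVec (u t) + Gb.f j + νb t + sb j t) ∧
      (∀ t < T, ∀ k, (G.P.mulVec (x t)) k ≤ G.p k) ∧
      (∀ t < T, ∀ k, (Gb.P.mulVec (xb t)) k ≤ Gb.p k) ∧
      (∀ i j, ∀ t < T,
        (G.C i).mulVec (x t) + (G.D i).mulVec (u t) + G.g i + η t
          = (Gb.C j).mulVec (xb t) + (Gb.D j).mulVec (u t) + Gb.g j + ηb t + r i j t) ∧
      (∀ t < T, ‖η t‖ ≤ G.εη) ∧ (∀ t < T, ‖ηb t‖ ≤ Gb.εη) ∧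
      (∀ t < T, ‖ν t‖ ≤ G.εν) ∧ (∀ t < T, ‖νb t‖ ≤ Gb.εν) ∧
      (∀ i j, ∀ t < T, ∀ k, a i j t = 0 ∨ s i t k = 0) ∧
      (∀ i j, ∀ t < T, ∀ k, a i j t = 0 ∨ sb j t k = 0) ∧
      (∀ i j, ∀ t < T, ∀ l, a i j t = 0 ∨ r i j t l = 0) ∧
      (∀ t < T, max ‖η t - ηb t‖ ‖ν t - νb t‖ ≤ δ) :=
  not_TDistinguishable_implies_feasibility_general G Gb U hU1 hnd
end
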